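/- Let p, r ∈ ℕ, let c : Fin r → Fin r → Fin r → ℝ be Lie structure constants (skew-symmetric and satisfying the structure-constant Jacobi identity), and let Φ¹, Φ² : (Fin p → ℝ) → Matrix (Fin p) (Fin r) ℝ both be smooth matrices of infinitesimals compatible with c. Define the averaged block structure matrix [Λ](z, ξ) = fromBlocks 0 ((1/2) • (Φ¹(z) + Φ²(z))) (−((1/2) • (Φ¹(z) + Φ²(z)))ᵀ) (L(ξ)), where L(ξ) i j = Σ_k c i j k * ξ k. Then [Λ] satisfies the Poisson–Jacobi condition (equivalently, the two Poisson brackets determined by Φ¹ and Φ² are compatible) if and only if the difference vector fields pairwise commute, i.e. for all i, j ∈ Fin r, m ∈ Fin p and z: Σ_{l ∈ Fin p} ((Φ¹ − Φ²)(z) l j * ∂_l (Φ¹ − Φ²)_{m i}(z) − (Φ¹ − Φ²)(z) l i * ∂_l (Φ¹ − Φ²)_{m j}(z)) = 0. -/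

import Mathlib

open Matrix

/-- Directional (partial) derivative of `f` at `w` in the `a`-th coordinate direction. -/
noncomputable def pd {ι : Type*} [Fintype ι] [DecidableEq ι]
    (a : ι) (f : (ι → ℝ) → ℝ) (w : ι → ℝ) : ℝ :=
  fderiv ℝ f w (Pi.single a 1)

/-- The Poisson–Jacobi condition for a matrix-valued map `Λ` on `ι → ℝ`. -/
def PoissonJacobi {ι : Type*} [Fintype ι] [DecidableEq ι]
    (Λ : (ι → ℝ) → Matrix ι ι ℝ) : Prop :=
  ∀ (i j k : ι) (w : ι → ℝ),
    ∑ l, (Λ w i l * pd l (fun v => Λ v j k) w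
      + Λ w j l * pd l (fun v => Λ v k i) w
      + Λ w k l * pd l (fun v => Λ v i j) w) = 0

/-- The averaged block structure matrix
`fromBlocks 0 ((1/2) • (Φ¹ + Φ²)) (-((1/2) • (Φ¹ + Φ²))ᵀ) L(ξ)`. -/
noncomputable def avgLambda {p r : ℕ} (c : Fin r → Fin r → Fin r → ℝ)
    (Φ₁ Φ₂ : (Fin p → ℝ) → Matrix (Fin p) (Fin r) ℝ) (w : (Fin p ⊕ Fin r) → ℝ) :
    Matrix (Fin p ⊕ Fin r) (Fin p ⊕ Fin r) ℝ :=
  Matrix.fromBlocks 0 ((1 / 2 : ℝ) • (Φ₁ (w ∘ Sum.inl) + Φ₂ (w ∘ Sum.inl)))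
    (-((1 / 2 : ℝ) • (Φ₁ (w ∘ Sum.inl) + Φ₂ (w ∘ Sum.inl)))ᵀ)
    (Matrix.of fun i j => ∑ k, c i j k * (w ∘ Sum.inr) k)

section pdlemmas
variable {ι : Type*} [Fintype ι] [DecidableEq ι] {f g : (ι → ℝ) → ℝ} {w : ι → ℝ} {a : ι}

lemma pd_const (t : ℝ) : pd a (fun _ => t) w = 0 := by simp [pd]

lemma pd_add (hf : DifferentiableAt ℝ f w) (hg : DifferentiableAt ℝ g w) :
    pd a (fun v => f v + g v) w = pd a f w + pd a g w := by
  simp [pd, fderiv_fun_add hf hg]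

lemma pd_sub (hf : DifferentiableAt ℝ f w) (hg : DifferentiableAt ℝ g w) :
    pd a (fun v => f v - g v) w = pd a f w - pd a g w := by
  simp [pd, fderiv_fun_sub hf hg]

lemma pd_const_mul (t : ℝ) (hf : DifferentiableAt ℝ f w) :
    pd a (fun v => t * f v) w = t * pd a f w := by
  simp [pd, fderiv_const_mul hf t]

lemma pd_neg' : pd a (fun v => -(f v)) w = -(pd a f w) := by
  simp [pd, fderiv_neg]

lemma pd_sum {κ : Type*} (s : Finset κ) (F : κ → (ι → ℝ) → ℝ)
    (hF : ∀ k ∈ s, DifferentiableAt ℝ (F k) w) :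
    pd a (fun v => ∑ k ∈ s, F k v) w = ∑ k ∈ s, pd a (F k) w := by
  simp [pd, fderiv_fun_sum hF]

lemma pd_proj (i : ι) : pd a (fun v => v i) w = (Pi.single a (1 : ℝ) : ι → ℝ) i := by
  have : (fun v : ι → ℝ => v i)
      = (ContinuousLinearMap.proj (R := ℝ) (φ := fun _ : ι => ℝ) i) := rfl
  simp [pd, this, ContinuousLinearMap.fderiv]

end pdlemmas

section restrlemmas
variable {p r : ℕ} {w : (Fin p ⊕ Fin r) → ℝ}

noncomputable def restr (p r : ℕ) : ((Fin p ⊕ Fin r) → ℝ) →L[ℝ] (Fin p → ℝ) :=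
  ContinuousLinearMap.pi fun l =>
    ContinuousLinearMap.proj (R := ℝ) (φ := fun _ : Fin p ⊕ Fin r => ℝ) (Sum.inl l)

lemma restr_apply (v : (Fin p ⊕ Fin r) → ℝ) : restr p r v = v ∘ Sum.inl := rfl

lemma pd_comp_inl (f : (Fin p → ℝ) → ℝ) (hf : DifferentiableAt ℝ f (w ∘ Sum.inl)) (l : Fin p) :
    pd (Sum.inl l) (fun v => f (v ∘ Sum.inl)) w = pd l f (w ∘ Sum.inl) := by
  have h1 : (fun v : (Fin p ⊕ Fin r) → ℝ => f (v ∘ Sum.inl)) = f ∘ (restr p r) := rfl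
  have h2 : fderiv ℝ (f ∘ (restr p r)) w = (fderiv ℝ f (w ∘ Sum.inl)).comp (restr p r) :=
    (fderiv_comp w hf (restr p r).differentiableAt).trans (by rw [(restr p r).fderiv]; rfl)
  have h3 : restr p r (Pi.single (Sum.inl l) (1:ℝ)) = Pi.single l (1:ℝ) := by
    funext l'; simp [restr_apply, Pi.single_apply, Function.comp]
  simp [pd, h1, h2, h3]

lemma pd_comp_inr (f : (Fin p → ℝ) → ℝ) (hf : DifferentiableAt ℝ f (w ∘ Sum.inl)) (d : Fin r) :
    pd (Sum.inr d) (fun v => f (v ∘ Sum.inl)) w = 0 := by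
  have h1 : (fun v : (Fin p ⊕ Fin r) → ℝ => f (v ∘ Sum.inl)) = f ∘ (restr p r) := rfl
  have h2 : fderiv ℝ (f ∘ (restr p r)) w = (fderiv ℝ f (w ∘ Sum.inl)).comp (restr p r) :=
    (fderiv_comp w hf (restr p r).differentiableAt).trans (by rw [(restr p r).fderiv]; rfl)
  have h3 : restr p r (Pi.single (Sum.inr d) (1:ℝ)) = 0 := by
    funext l'; simp [restr_apply, Pi.single_apply, Function.comp]
  simp [pd, h1, h2, h3]

lemma pd_lin_inl (coef : Fin r → ℝ) (t : Fin p) :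
    pd (Sum.inl t) (fun v : (Fin p ⊕ Fin r) → ℝ => ∑ k, coef k * v (Sum.inr k)) w = 0 := by
  have hp : ∀ k : Fin r, DifferentiableAt ℝ (fun v : (Fin p ⊕ Fin r) → ℝ => v (Sum.inr k)) w :=
    fun k => (ContinuousLinearMap.proj (R := ℝ) (φ := fun _ : Fin p ⊕ Fin r => ℝ)
      (Sum.inr k)).differentiableAt
  rw [pd_sum Finset.univ (fun k v => coef k * v (Sum.inr k)) (fun k _ =>
    (hp k).const_mul (coef k))]
  have : ∀ k : Fin r, pd (Sum.inl t) (fun v : (Fin p ⊕ Fin r) → ℝ => coef k * v (Sum.inr k)) w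
      = 0 := by
    intro k
    rw [pd_const_mul (coef k) (hp k), pd_proj]
    simp [Pi.single_apply]
  rw [Finset.sum_congr rfl fun k _ => this k]
  simp

lemma pd_lin_inr (coef : Fin r → ℝ) (d : Fin r) :
    pd (Sum.inr d) (fun v : (Fin p ⊕ Fin r) → ℝ => ∑ k, coef k * v (Sum.inr k)) w = coef d := by
  have hp : ∀ k : Fin r, DifferentiableAt ℝ (fun v : (Fin p ⊕ Fin r) → ℝ => v (Sum.inr k)) w :=
    fun k => (ContinuousLinearMap.proj (R := ℝ) (φ := fun _ : Fin p ⊕ Fin r => ℝ)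
      (Sum.inr k)).differentiableAt
  rw [pd_sum Finset.univ (fun k v => coef k * v (Sum.inr k)) (fun k _ =>
    (hp k).const_mul (coef k))]
  have : ∀ k : Fin r, pd (Sum.inr d) (fun v : (Fin p ⊕ Fin r) → ℝ => coef k * v (Sum.inr k)) w
      = coef k * (if k = d then (1:ℝ) else 0) := by
    intro k
    rw [pd_const_mul (coef k) (hp k), pd_proj]
    simp [Pi.single_apply, Sum.inr.injEq, eq_comm]
  rw [Finset.sum_congr rfl fun k _ => this k]
  simp

end restrlemmas

section entries
variable {p r : ℕ} (c : Fin r → Fin r → Fin r → ℝ)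
  (Φ₁ Φ₂ : (Fin p → ℝ) → Matrix (Fin p) (Fin r) ℝ)

lemma entry11 (v : (Fin p ⊕ Fin r) → ℝ) (m n : Fin p) :
    avgLambda c Φ₁ Φ₂ v (Sum.inl m) (Sum.inl n) = 0 := by
  simp [avgLambda]

lemma entry12 (v : (Fin p ⊕ Fin r) → ℝ) (m : Fin p) (a : Fin r) :
    avgLambda c Φ₁ Φ₂ v (Sum.inl m) (Sum.inr a)
      = (1/2 : ℝ) * (Φ₁ (v ∘ Sum.inl) m a + Φ₂ (v ∘ Sum.inl) m a) := by
  simp [avgLambda, Matrix.smul_apply, Matrix.add_apply, smul_eq_mul]; ring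

lemma entry21 (v : (Fin p ⊕ Fin r) → ℝ) (a : Fin r) (m : Fin p) :
    avgLambda c Φ₁ Φ₂ v (Sum.inr a) (Sum.inl m)
      = -((1/2 : ℝ) * (Φ₁ (v ∘ Sum.inl) m a + Φ₂ (v ∘ Sum.inl) m a)) := by
  simp [avgLambda, Matrix.smul_apply, Matrix.add_apply, smul_eq_mul]; ring

lemma entry22 (v : (Fin p ⊕ Fin r) → ℝ) (a b : Fin r) :
    avgLambda c Φ₁ Φ₂ v (Sum.inr a) (Sum.inr b) = ∑ k, c a b k * v (Sum.inr k) := by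
  simp [avgLambda, Function.comp]

variable (hd1 : ∀ (m : Fin p) (a : Fin r) (z : Fin p → ℝ),
    DifferentiableAt ℝ (fun z => Φ₁ z m a) z)
  (hd2 : ∀ (m : Fin p) (a : Fin r) (z : Fin p → ℝ),
    DifferentiableAt ℝ (fun z => Φ₂ z m a) z)

section pdE
variable {w : (Fin p ⊕ Fin r) → ℝ}

include hd1 hd2 in
lemma pdE12_inl (t m : Fin p) (a : Fin r) :
    pd (Sum.inl t) (fun v => avgLambda c Φ₁ Φ₂ v (Sum.inl m) (Sum.inr a)) w
      = (1/2 : ℝ) * (pd t (fun z => Φ₁ z m a) (w ∘ Sum.inl)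
          + pd t (fun z => Φ₂ z m a) (w ∘ Sum.inl)) := by
  have hfun : (fun v : (Fin p ⊕ Fin r) → ℝ => avgLambda c Φ₁ Φ₂ v (Sum.inl m) (Sum.inr a))
      = (fun v => (fun zz => (1/2 : ℝ) * (Φ₁ zz m a + Φ₂ zz m a)) (v ∘ Sum.inl)) :=
    funext fun v => entry12 c Φ₁ Φ₂ v m a
  rw [hfun, pd_comp_inl _ (((hd1 m a _).fun_add (hd2 m a _)).const_mul _),
    pd_const_mul _ ((hd1 m a _).fun_add (hd2 m a _)), pd_add (hd1 m a _) (hd2 m a _)]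

include hd1 hd2 in
lemma pdE12_inr (d : Fin r) (m : Fin p) (a : Fin r) :
    pd (Sum.inr d) (fun v => avgLambda c Φ₁ Φ₂ v (Sum.inl m) (Sum.inr a)) w = 0 := by
  have hfun : (fun v : (Fin p ⊕ Fin r) → ℝ => avgLambda c Φ₁ Φ₂ v (Sum.inl m) (Sum.inr a))
      = (fun v => (fun zz => (1/2 : ℝ) * (Φ₁ zz m a + Φ₂ zz m a)) (v ∘ Sum.inl)) :=
    funext fun v => entry12 c Φ₁ Φ₂ v m a
  rw [hfun, pd_comp_inr _ (((hd1 m a _).fun_add (hd2 m a _)).const_mul _)]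

include hd1 hd2 in
lemma pdE21_inl (t m : Fin p) (a : Fin r) :
    pd (Sum.inl t) (fun v => avgLambda c Φ₁ Φ₂ v (Sum.inr a) (Sum.inl m)) w
      = -((1/2 : ℝ) * (pd t (fun z => Φ₁ z m a) (w ∘ Sum.inl)
          + pd t (fun z => Φ₂ z m a) (w ∘ Sum.inl))) := by
  have hfun : (fun v : (Fin p ⊕ Fin r) → ℝ => avgLambda c Φ₁ Φ₂ v (Sum.inr a) (Sum.inl m))
      = (fun v => (fun zz => -((1/2 : ℝ) * (Φ₁ zz m a + Φ₂ zz m a))) (v ∘ Sum.inl)) :=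
    funext fun v => entry21 c Φ₁ Φ₂ v a m
  rw [hfun, pd_comp_inl _ ((((hd1 m a _).fun_add (hd2 m a _)).const_mul _).fun_neg), pd_neg',
    pd_const_mul _ ((hd1 m a _).fun_add (hd2 m a _)), pd_add (hd1 m a _) (hd2 m a _)]

include hd1 hd2 in
lemma pdE21_inr (d : Fin r) (m : Fin p) (a : Fin r) :
    pd (Sum.inr d) (fun v => avgLambda c Φ₁ Φ₂ v (Sum.inr a) (Sum.inl m)) w = 0 := by
  have hfun : (fun v : (Fin p ⊕ Fin r) → ℝ => avgLambda c Φ₁ Φ₂ v (Sum.inr a) (Sum.inl m))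
      = (fun v => (fun zz => -((1/2 : ℝ) * (Φ₁ zz m a + Φ₂ zz m a))) (v ∘ Sum.inl)) :=
    funext fun v => entry21 c Φ₁ Φ₂ v a m
  rw [hfun, pd_comp_inr _ ((((hd1 m a _).fun_add (hd2 m a _)).const_mul _).fun_neg)]

lemma pdE22_inl (t : Fin p) (a b : Fin r) :
    pd (Sum.inl t) (fun v => avgLambda c Φ₁ Φ₂ v (Sum.inr a) (Sum.inr b)) w = 0 := by
  have hfun : (fun v : (Fin p ⊕ Fin r) → ℝ => avgLambda c Φ₁ Φ₂ v (Sum.inr a) (Sum.inr b))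
      = (fun v => ∑ k, c a b k * v (Sum.inr k)) :=
    funext fun v => entry22 c Φ₁ Φ₂ v a b
  rw [hfun, pd_lin_inl]

lemma pdE22_inr (d : Fin r) (a b : Fin r) :
    pd (Sum.inr d) (fun v => avgLambda c Φ₁ Φ₂ v (Sum.inr a) (Sum.inr b)) w = c a b d := by
  have hfun : (fun v : (Fin p ⊕ Fin r) → ℝ => avgLambda c Φ₁ Φ₂ v (Sum.inr a) (Sum.inr b))
      = (fun v => ∑ k, c a b k * v (Sum.inr k)) :=
    funext fun v => entry22 c Φ₁ Φ₂ v a b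
  rw [hfun, pd_lin_inr]

lemma pdE11 (e : Fin p ⊕ Fin r) (m n : Fin p) :
    pd e (fun v => avgLambda c Φ₁ Φ₂ v (Sum.inl m) (Sum.inl n)) w = 0 := by
  have hfun : (fun v : (Fin p ⊕ Fin r) → ℝ => avgLambda c Φ₁ Φ₂ v (Sum.inl m) (Sum.inl n))
      = (fun _ => (0 : ℝ)) := funext fun v => entry11 c Φ₁ Φ₂ v m n
  rw [hfun, pd_const]

end pdE
end entries

lemma jac_rot {ι : Type*} [Fintype ι] [DecidableEq ι]
    (Λ : (ι → ℝ) → Matrix ι ι ℝ) (i j k : ι) (w : ι → ℝ) :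
    ∑ l, (Λ w i l * pd l (fun v => Λ v j k) w + Λ w j l * pd l (fun v => Λ v k i) w
        + Λ w k l * pd l (fun v => Λ v i j) w)
    = ∑ l, (Λ w k l * pd l (fun v => Λ v i j) w + Λ w i l * pd l (fun v => Λ v j k) w
        + Λ w j l * pd l (fun v => Λ v k i) w) :=
  Finset.sum_congr rfl fun _ _ => by ring

section cases
variable {p r : ℕ} (c : Fin r → Fin r → Fin r → ℝ)
  (Φ₁ Φ₂ : (Fin p → ℝ) → Matrix (Fin p) (Fin r) ℝ)
  (hd1 : ∀ (m : Fin p) (a : Fin r) (z : Fin p → ℝ),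
    DifferentiableAt ℝ (fun z => Φ₁ z m a) z)
  (hd2 : ∀ (m : Fin p) (a : Fin r) (z : Fin p → ℝ),
    DifferentiableAt ℝ (fun z => Φ₂ z m a) z)

lemma case_xxx (m n q : Fin p) (w : (Fin p ⊕ Fin r) → ℝ) :
    ∑ l, (avgLambda c Φ₁ Φ₂ w (Sum.inl m) l
          * pd l (fun v => avgLambda c Φ₁ Φ₂ v (Sum.inl n) (Sum.inl q)) w
      + avgLambda c Φ₁ Φ₂ w (Sum.inl n) l
          * pd l (fun v => avgLambda c Φ₁ Φ₂ v (Sum.inl q) (Sum.inl m)) w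
      + avgLambda c Φ₁ Φ₂ w (Sum.inl q) l
          * pd l (fun v => avgLambda c Φ₁ Φ₂ v (Sum.inl m) (Sum.inl n)) w) = 0 := by
  have h : ∀ l : Fin p ⊕ Fin r,
      (avgLambda c Φ₁ Φ₂ w (Sum.inl m) l
          * pd l (fun v => avgLambda c Φ₁ Φ₂ v (Sum.inl n) (Sum.inl q)) w
        + avgLambda c Φ₁ Φ₂ w (Sum.inl n) l
          * pd l (fun v => avgLambda c Φ₁ Φ₂ v (Sum.inl q) (Sum.inl m)) w
        + avgLambda c Φ₁ Φ₂ w (Sum.inl q) l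
          * pd l (fun v => avgLambda c Φ₁ Φ₂ v (Sum.inl m) (Sum.inl n)) w) = 0 := by
    intro l
    rw [pdE11 c Φ₁ Φ₂ l n q, pdE11 c Φ₁ Φ₂ l q m, pdE11 c Φ₁ Φ₂ l m n]
    ring
  rw [Finset.sum_congr rfl fun l _ => h l]
  simp

include hd1 hd2 in
lemma case_xxr (m n : Fin p) (a : Fin r) (w : (Fin p ⊕ Fin r) → ℝ) :
    ∑ l, (avgLambda c Φ₁ Φ₂ w (Sum.inl m) l
          * pd l (fun v => avgLambda c Φ₁ Φ₂ v (Sum.inl n) (Sum.inr a)) w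
      + avgLambda c Φ₁ Φ₂ w (Sum.inl n) l
          * pd l (fun v => avgLambda c Φ₁ Φ₂ v (Sum.inr a) (Sum.inl m)) w
      + avgLambda c Φ₁ Φ₂ w (Sum.inr a) l
          * pd l (fun v => avgLambda c Φ₁ Φ₂ v (Sum.inl m) (Sum.inl n)) w) = 0 := by
  rw [Fintype.sum_sum_type]
  have h1 : ∀ t : Fin p,
      (avgLambda c Φ₁ Φ₂ w (Sum.inl m) (Sum.inl t)
          * pd (Sum.inl t) (fun v => avgLambda c Φ₁ Φ₂ v (Sum.inl n) (Sum.inr a)) w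
        + avgLambda c Φ₁ Φ₂ w (Sum.inl n) (Sum.inl t)
          * pd (Sum.inl t) (fun v => avgLambda c Φ₁ Φ₂ v (Sum.inr a) (Sum.inl m)) w
        + avgLambda c Φ₁ Φ₂ w (Sum.inr a) (Sum.inl t)
          * pd (Sum.inl t) (fun v => avgLambda c Φ₁ Φ₂ v (Sum.inl m) (Sum.inl n)) w) = 0 := by
    intro t
    rw [entry11 c Φ₁ Φ₂ w m t, entry11 c Φ₁ Φ₂ w n t, pdE11 c Φ₁ Φ₂ (Sum.inl t) m n]
    ring
  have h2 : ∀ d : Fin r,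
      (avgLambda c Φ₁ Φ₂ w (Sum.inl m) (Sum.inr d)
          * pd (Sum.inr d) (fun v => avgLambda c Φ₁ Φ₂ v (Sum.inl n) (Sum.inr a)) w
        + avgLambda c Φ₁ Φ₂ w (Sum.inl n) (Sum.inr d)
          * pd (Sum.inr d) (fun v => avgLambda c Φ₁ Φ₂ v (Sum.inr a) (Sum.inl m)) w
        + avgLambda c Φ₁ Φ₂ w (Sum.inr a) (Sum.inr d)
          * pd (Sum.inr d) (fun v => avgLambda c Φ₁ Φ₂ v (Sum.inl m) (Sum.inl n)) w) = 0 := by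
    intro d
    rw [pdE12_inr c Φ₁ Φ₂ hd1 hd2 d n a, pdE21_inr c Φ₁ Φ₂ hd1 hd2 d m a,
      pdE11 c Φ₁ Φ₂ (Sum.inr d) m n]
    ring
  calc (∑ t : Fin p, _) + (∑ d : Fin r, _)
      = (∑ _t : Fin p, (0:ℝ)) + (∑ _d : Fin r, (0:ℝ)) := by
        exact congrArg₂ (· + ·) (Finset.sum_congr rfl fun t _ => h1 t)
          (Finset.sum_congr rfl fun d _ => h2 d)
    _ = 0 := by simp

include hd1 hd2 in
lemma key_xrr
    (hc1 : ∀ (i j : Fin r) (m : Fin p) (z : Fin p → ℝ),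
      ∑ l, (Φ₁ z l i * pd l (fun v => Φ₁ v m j) z - Φ₁ z l j * pd l (fun v => Φ₁ v m i) z)
        = -∑ k, c i j k * Φ₁ z m k)
    (hc2 : ∀ (i j : Fin r) (m : Fin p) (z : Fin p → ℝ),
      ∑ l, (Φ₂ z l i * pd l (fun v => Φ₂ v m j) z - Φ₂ z l j * pd l (fun v => Φ₂ v m i) z)
        = -∑ k, c i j k * Φ₂ z m k)
    (m : Fin p) (a b : Fin r) (w : (Fin p ⊕ Fin r) → ℝ) :
    ∑ l, (avgLambda c Φ₁ Φ₂ w (Sum.inl m) l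
          * pd l (fun v => avgLambda c Φ₁ Φ₂ v (Sum.inr a) (Sum.inr b)) w
      + avgLambda c Φ₁ Φ₂ w (Sum.inr a) l
          * pd l (fun v => avgLambda c Φ₁ Φ₂ v (Sum.inr b) (Sum.inl m)) w
      + avgLambda c Φ₁ Φ₂ w (Sum.inr b) l
          * pd l (fun v => avgLambda c Φ₁ Φ₂ v (Sum.inl m) (Sum.inr a)) w)
    = -(1/4 : ℝ) * ∑ t, ((Φ₁ (w ∘ Sum.inl) t a - Φ₂ (w ∘ Sum.inl) t a)
          * pd t (fun v => Φ₁ v m b - Φ₂ v m b) (w ∘ Sum.inl)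
        - (Φ₁ (w ∘ Sum.inl) t b - Φ₂ (w ∘ Sum.inl) t b)
          * pd t (fun v => Φ₁ v m a - Φ₂ v m a) (w ∘ Sum.inl)) := by
  rw [show (∑ t, ((Φ₁ (w ∘ Sum.inl) t a - Φ₂ (w ∘ Sum.inl) t a)
          * pd t (fun v => Φ₁ v m b - Φ₂ v m b) (w ∘ Sum.inl)
        - (Φ₁ (w ∘ Sum.inl) t b - Φ₂ (w ∘ Sum.inl) t b)
          * pd t (fun v => Φ₁ v m a - Φ₂ v m a) (w ∘ Sum.inl)))
      = ∑ t, ((Φ₁ (w ∘ Sum.inl) t a - Φ₂ (w ∘ Sum.inl) t a)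
          * (pd t (fun z => Φ₁ z m b) (w ∘ Sum.inl) - pd t (fun z => Φ₂ z m b) (w ∘ Sum.inl))
        - (Φ₁ (w ∘ Sum.inl) t b - Φ₂ (w ∘ Sum.inl) t b)
          * (pd t (fun z => Φ₁ z m a) (w ∘ Sum.inl) - pd t (fun z => Φ₂ z m a) (w ∘ Sum.inl)))
      from Finset.sum_congr rfl fun t _ => by
        rw [pd_sub (hd1 m b _) (hd2 m b _), pd_sub (hd1 m a _) (hd2 m a _)]]
  rw [Fintype.sum_sum_type]
  have h1 : ∀ t : Fin p,
      (avgLambda c Φ₁ Φ₂ w (Sum.inl m) (Sum.inl t)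
          * pd (Sum.inl t) (fun v => avgLambda c Φ₁ Φ₂ v (Sum.inr a) (Sum.inr b)) w
        + avgLambda c Φ₁ Φ₂ w (Sum.inr a) (Sum.inl t)
          * pd (Sum.inl t) (fun v => avgLambda c Φ₁ Φ₂ v (Sum.inr b) (Sum.inl m)) w
        + avgLambda c Φ₁ Φ₂ w (Sum.inr b) (Sum.inl t)
          * pd (Sum.inl t) (fun v => avgLambda c Φ₁ Φ₂ v (Sum.inl m) (Sum.inr a)) w)
      = (1/2 : ℝ) * (Φ₁ (w ∘ Sum.inl) t a * pd t (fun v => Φ₁ v m b) (w ∘ Sum.inl)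
            - Φ₁ (w ∘ Sum.inl) t b * pd t (fun v => Φ₁ v m a) (w ∘ Sum.inl))
        + (1/2 : ℝ) * (Φ₂ (w ∘ Sum.inl) t a * pd t (fun v => Φ₂ v m b) (w ∘ Sum.inl)
            - Φ₂ (w ∘ Sum.inl) t b * pd t (fun v => Φ₂ v m a) (w ∘ Sum.inl))
        - (1/4 : ℝ) * ((Φ₁ (w ∘ Sum.inl) t a - Φ₂ (w ∘ Sum.inl) t a)
            * (pd t (fun z => Φ₁ z m b) (w ∘ Sum.inl) - pd t (fun z => Φ₂ z m b) (w ∘ Sum.inl))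
          - (Φ₁ (w ∘ Sum.inl) t b - Φ₂ (w ∘ Sum.inl) t b)
            * (pd t (fun z => Φ₁ z m a) (w ∘ Sum.inl)
              - pd t (fun z => Φ₂ z m a) (w ∘ Sum.inl))) := by
    intro t
    rw [entry11 c Φ₁ Φ₂ w m t, entry21 c Φ₁ Φ₂ w a t, entry21 c Φ₁ Φ₂ w b t,
      pdE22_inl c Φ₁ Φ₂ t a b, pdE21_inl c Φ₁ Φ₂ hd1 hd2 t m b,
      pdE12_inl c Φ₁ Φ₂ hd1 hd2 t m a]
    ring
  have h2 : ∀ d : Fin r,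
      (avgLambda c Φ₁ Φ₂ w (Sum.inl m) (Sum.inr d)
          * pd (Sum.inr d) (fun v => avgLambda c Φ₁ Φ₂ v (Sum.inr a) (Sum.inr b)) w
        + avgLambda c Φ₁ Φ₂ w (Sum.inr a) (Sum.inr d)
          * pd (Sum.inr d) (fun v => avgLambda c Φ₁ Φ₂ v (Sum.inr b) (Sum.inl m)) w
        + avgLambda c Φ₁ Φ₂ w (Sum.inr b) (Sum.inr d)
          * pd (Sum.inr d) (fun v => avgLambda c Φ₁ Φ₂ v (Sum.inl m) (Sum.inr a)) w)
      = (1/2 : ℝ) * (c a b d * Φ₁ (w ∘ Sum.inl) m d)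
        + (1/2 : ℝ) * (c a b d * Φ₂ (w ∘ Sum.inl) m d) := by
    intro d
    rw [entry12 c Φ₁ Φ₂ w m d, pdE22_inr c Φ₁ Φ₂ d a b,
      pdE21_inr c Φ₁ Φ₂ hd1 hd2 d m b, pdE12_inr c Φ₁ Φ₂ hd1 hd2 d m a]
    ring
  rw [Finset.sum_congr rfl fun t (_ : t ∈ Finset.univ) => h1 t,
    Finset.sum_congr rfl fun d (_ : d ∈ Finset.univ) => h2 d]
  rw [Finset.sum_sub_distrib, Finset.sum_add_distrib, Finset.sum_add_distrib,
    ← Finset.mul_sum, ← Finset.mul_sum, ← Finset.mul_sum, ← Finset.mul_sum, ← Finset.mul_sum]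
  rw [hc1 a b m (w ∘ Sum.inl), hc2 a b m (w ∘ Sum.inl)]
  ring

omit hd1 hd2 in
lemma case_rrr
    (hskew : ∀ i j k, c j i k = -(c i j k))
    (hjac : ∀ i j l m, ∑ k, (c i j k * c k l m + c j l k * c k i m + c l i k * c k j m) = 0)
    (a b e : Fin r) (w : (Fin p ⊕ Fin r) → ℝ) :
    ∑ l, (avgLambda c Φ₁ Φ₂ w (Sum.inr a) l
          * pd l (fun v => avgLambda c Φ₁ Φ₂ v (Sum.inr b) (Sum.inr e)) w
      + avgLambda c Φ₁ Φ₂ w (Sum.inr b) l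
          * pd l (fun v => avgLambda c Φ₁ Φ₂ v (Sum.inr e) (Sum.inr a)) w
      + avgLambda c Φ₁ Φ₂ w (Sum.inr e) l
          * pd l (fun v => avgLambda c Φ₁ Φ₂ v (Sum.inr a) (Sum.inr b)) w) = 0 := by
  rw [Fintype.sum_sum_type]
  have h1 : ∀ t : Fin p,
      (avgLambda c Φ₁ Φ₂ w (Sum.inr a) (Sum.inl t)
          * pd (Sum.inl t) (fun v => avgLambda c Φ₁ Φ₂ v (Sum.inr b) (Sum.inr e)) w
        + avgLambda c Φ₁ Φ₂ w (Sum.inr b) (Sum.inl t)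
          * pd (Sum.inl t) (fun v => avgLambda c Φ₁ Φ₂ v (Sum.inr e) (Sum.inr a)) w
        + avgLambda c Φ₁ Φ₂ w (Sum.inr e) (Sum.inl t)
          * pd (Sum.inl t) (fun v => avgLambda c Φ₁ Φ₂ v (Sum.inr a) (Sum.inr b)) w) = 0 := by
    intro t
    rw [pdE22_inl c Φ₁ Φ₂ t b e, pdE22_inl c Φ₁ Φ₂ t e a, pdE22_inl c Φ₁ Φ₂ t a b]
    ring
  have h2 : ∀ d : Fin r,
      (avgLambda c Φ₁ Φ₂ w (Sum.inr a) (Sum.inr d)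
          * pd (Sum.inr d) (fun v => avgLambda c Φ₁ Φ₂ v (Sum.inr b) (Sum.inr e)) w
        + avgLambda c Φ₁ Φ₂ w (Sum.inr b) (Sum.inr d)
          * pd (Sum.inr d) (fun v => avgLambda c Φ₁ Φ₂ v (Sum.inr e) (Sum.inr a)) w
        + avgLambda c Φ₁ Φ₂ w (Sum.inr e) (Sum.inr d)
          * pd (Sum.inr d) (fun v => avgLambda c Φ₁ Φ₂ v (Sum.inr a) (Sum.inr b)) w)
      = ∑ k, ((c b e d * c d a k + c e a d * c d b k + c a b d * c d e k)
          * (-(w (Sum.inr k)))) := by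
    intro d
    rw [entry22 c Φ₁ Φ₂ w a d, entry22 c Φ₁ Φ₂ w b d, entry22 c Φ₁ Φ₂ w e d,
      pdE22_inr c Φ₁ Φ₂ d b e, pdE22_inr c Φ₁ Φ₂ d e a, pdE22_inr c Φ₁ Φ₂ d a b]
    rw [Finset.sum_mul, Finset.sum_mul, Finset.sum_mul, ← Finset.sum_add_distrib,
      ← Finset.sum_add_distrib]
    exact Finset.sum_congr rfl fun k _ => by
      rw [hskew d a k, hskew d b k, hskew d e k]; ring
  calc (∑ t : Fin p, _) + (∑ d : Fin r, _)
      = (∑ _t : Fin p, (0:ℝ))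
        + (∑ d : Fin r, ∑ k, ((c b e d * c d a k + c e a d * c d b k + c a b d * c d e k)
            * (-(w (Sum.inr k))))) := by
        exact congrArg₂ (· + ·) (Finset.sum_congr rfl fun t _ => h1 t)
          (Finset.sum_congr rfl fun d _ => h2 d)
    _ = 0 := by
        rw [Finset.sum_comm]
        have h3 : ∀ k : Fin r,
            (∑ d, ((c b e d * c d a k + c e a d * c d b k + c a b d * c d e k)
              * (-(w (Sum.inr k))))) = 0 := by
          intro k
          rw [← Finset.sum_mul, hjac b e a k, zero_mul]
        rw [Finset.sum_congr rfl fun k _ => h3 k]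
        simp

end cases

/-- Two Poisson brackets obtained from two actions of the same group (with
matrices of infinitesimals `Φ¹`, `Φ²` compatible with the structure constants `c`) are
compatible — i.e. the averaged block matrix satisfies the Poisson–Jacobi condition — if and
only if the difference vector fields pairwise commute. -/
theorem compatible_iff_difference_commute {p r : ℕ} (c : Fin r → Fin r → Fin r → ℝ)
    (hskew : ∀ i j k, c j i k = -(c i j k))
    (hjac : ∀ i j l m, ∑ k, (c i j k * c k l m + c j l k * c k i m + c l i k * c k j m) = 0)
    (Φ₁ Φ₂ : (Fin p → ℝ) → Matrix (Fin p) (Fin r) ℝ)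
    (hΦ₁smooth : ∀ m j, ContDiff ℝ (⊤ : ℕ∞) fun z => Φ₁ z m j)
    (hΦ₂smooth : ∀ m j, ContDiff ℝ (⊤ : ℕ∞) fun z => Φ₂ z m j)
    (hΦ₁compat : ∀ (i j : Fin r) (m : Fin p) (z : Fin p → ℝ),
      ∑ l, (Φ₁ z l i * pd l (fun v => Φ₁ v m j) z - Φ₁ z l j * pd l (fun v => Φ₁ v m i) z)
        = -∑ k, c i j k * Φ₁ z m k)
    (hΦ₂compat : ∀ (i j : Fin r) (m : Fin p) (z : Fin p → ℝ),
      ∑ l, (Φ₂ z l i * pd l (fun v => Φ₂ v m j) z - Φ₂ z l j * pd l (fun v => Φ₂ v m i) z)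
        = -∑ k, c i j k * Φ₂ z m k) :
    PoissonJacobi (avgLambda c Φ₁ Φ₂) ↔
      ∀ (i j : Fin r) (m : Fin p) (z : Fin p → ℝ),
        ∑ l, ((Φ₁ z l j - Φ₂ z l j) * pd l (fun v => Φ₁ v m i - Φ₂ v m i) z
          - (Φ₁ z l i - Φ₂ z l i) * pd l (fun v => Φ₁ v m j - Φ₂ v m j) z) = 0 := by
  have hd1 : ∀ (m : Fin p) (a : Fin r) (z : Fin p → ℝ),
      DifferentiableAt ℝ (fun z => Φ₁ z m a) z :=
    fun m a z => ((hΦ₁smooth m a).differentiable (by simp)).differentiableAt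
  have hd2 : ∀ (m : Fin p) (a : Fin r) (z : Fin p → ℝ),
      DifferentiableAt ℝ (fun z => Φ₂ z m a) z :=
    fun m a z => ((hΦ₂smooth m a).differentiable (by simp)).differentiableAt
  constructor
  · intro hPJ i j m z
    have h := hPJ (Sum.inl m) (Sum.inr j) (Sum.inr i) (Sum.elim z 0)
    rw [key_xrr c Φ₁ Φ₂ hd1 hd2 hΦ₁compat hΦ₂compat m j i (Sum.elim z 0)] at h
    have hz : (Sum.elim z (0 : Fin r → ℝ) ∘ Sum.inl) = z := rfl
    rw [hz] at h
    linarith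
  · intro hcomm i j k w
    rcases i with m | a <;> rcases j with n | b <;> rcases k with q | e
    · exact case_xxx c Φ₁ Φ₂ m n q w
    · exact case_xxr c Φ₁ Φ₂ hd1 hd2 m n e w
    · rw [jac_rot]
      exact case_xxr c Φ₁ Φ₂ hd1 hd2 q m b w
    · rw [key_xrr c Φ₁ Φ₂ hd1 hd2 hΦ₁compat hΦ₂compat m b e w,
        hcomm e b m (w ∘ Sum.inl), mul_zero]
    · rw [jac_rot, jac_rot]
      exact case_xxr c Φ₁ Φ₂ hd1 hd2 n q a w
    · rw [jac_rot, jac_rot,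
        key_xrr c Φ₁ Φ₂ hd1 hd2 hΦ₁compat hΦ₂compat n e a w,
        hcomm a e n (w ∘ Sum.inl), mul_zero]
    · rw [jac_rot,
        key_xrr c Φ₁ Φ₂ hd1 hd2 hΦ₁compat hΦ₂compat q a b w,
        hcomm b a q (w ∘ Sum.inl), mul_zero]
    · exact case_rrr c Φ₁ Φ₂ hskew hjac a b e w
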